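/- arXiv:2412.08018 — 5 statements merged into one kernel-verified Lean document; each statement's English description precedes it below -/
import Mathlib

section
/- Let R ≥ 1 and let f be a holomorphic function on {z ∈ ℂ : |z| > R} with Laurent expansion f(z) = z + b₀ + Σ_{n≥1} b_n z^{−n}, and suppose f is injective on {z : |z| > R′} for some R′ ≥ R and admits there Grunsky coefficients (α_{mn})_{m,n≥1}, that is, complex numbers with α_{mn} = α_{nm} such that for all z, ζ with |z|, |ζ| > R′ and z ≠ ζ the double series Σ_{m,n≥1} α_{mn} z^{−m} ζ^{−n} converges absolutely and (f(z) − f(ζ))/(z − ζ) = exp(−Σ_{m,n≥1} α_{mn} z^{−m} ζ^{−n}). If for every N ≥ 1 and all complex numbers x₁, …, x_N one has |Σ_{m,n=1}^N √(m n) · α_{mn} · x_m x_n| ≤ Σ_{n=1}^N |x_n|², then f extends to an injective holomorphic function on 𝔻* = {z ∈ ℂ : |z| > 1}, i.e. there is an injective holomorphic F on 𝔻* with F(z) = f(z) for all |z| > max(R′, 1). -/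
open Complex Filter

/-!
Testing the Grunsky inequalities on `e_k` and on `e_k ± e_l` (polarization, using the symmetry
of `α`) gives `√(kl) |α_kl| ≤ 1`. Hence the Grunsky series `φ(z, ζ) = Σ α_mn z⁻ᵐ ζ⁻ⁿ` converges
locally uniformly on `𝔻* × 𝔻*`, and `G(z, ζ) = (z - ζ) exp (-φ(z, ζ))` is holomorphic in each
variable there. Near `∞` the Grunsky identity reads `f z - f ζ = G(z, ζ)`; with a base point `ζ₀`
the function `F z = f ζ₀ + G(z, ζ₀)` extends `f`, and the identity theorem, applied once in each
variable on the connected set `𝔻*`, propagates `F z - F ζ = G(z, ζ)` to all of `𝔻*`. As `exp`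
never vanishes, `F z = F ζ` forces `z = ζ`.
-/

theorem isPreconnected_setOf_lt_norm {r : ℝ} (hr : 0 < r) :
    IsPreconnected {z : ℂ | r < ‖z‖} := by
  have h : {z : ℂ | r < ‖z‖} = exp '' {w : ℂ | Real.log r < w.re} := by
    ext z
    constructor
    · intro hz
      have hz0 : z ≠ 0 := norm_pos_iff.mp (hr.trans hz)
      refine ⟨log z, ?_, exp_log hz0⟩
      simpa [log_re] using Real.log_lt_log hr hz
    · rintro ⟨w, hw, rfl⟩
      simpa [norm_exp] using (Real.log_lt_iff_lt_exp hr).mp hw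
  rw [h]
  exact (convex_halfSpace_re_gt _).isPreconnected.image _ continuous_exp.continuousOn

def GrunskyInequalities (α : ℕ → ℕ → ℂ) : Prop :=
  ∀ N : ℕ, 1 ≤ N → ∀ x : ℕ → ℂ,
    ‖∑ m ∈ Finset.Icc 1 N, ∑ n ∈ Finset.Icc 1 N,
        (Real.sqrt ((m : ℝ) * (n : ℝ)) : ℂ) * α m n * x m * x n‖
      ≤ ∑ n ∈ Finset.Icc 1 N, ‖x n‖ ^ 2

theorem sum_sum_mul_pi_single_add_pi_single {ι R : Type*} [DecidableEq ι] [CommRing R]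
    (s : Finset ι) (c : ι → ι → R) {k l : ι} (hk : k ∈ s) (hl : l ∈ s) (a b : R) :
    ∑ m ∈ s, ∑ n ∈ s, c m n * (Pi.single k a + Pi.single l b : ι → R) m *
        (Pi.single k a + Pi.single l b : ι → R) n =
      a ^ 2 * c k k + a * b * (c k l + c l k) + b ^ 2 * c l l := by
  simp only [Pi.add_apply, Pi.single_apply, mul_add, mul_ite, mul_zero, add_mul, ite_mul,
    zero_mul, Finset.sum_add_distrib, Finset.sum_ite_eq', hk, hl, if_true]
  ring

theorem sum_norm_sq_pi_single_add_pi_single {ι : Type*} [DecidableEq ι]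
    (s : Finset ι) {k l : ι} (hk : k ∈ s) (hl : l ∈ s) (hkl : k ≠ l) (a b : ℂ) :
    ∑ n ∈ s, ‖(Pi.single k a + Pi.single l b : ι → ℂ) n‖ ^ 2 = ‖a‖ ^ 2 + ‖b‖ ^ 2 := by
  rw [Finset.sum_eq_add_of_mem k l hk hl hkl]
  · simp [hkl, hkl.symm]
  · rintro n - ⟨hnk, hnl⟩
    simp [hnk, hnl]

theorem GrunskyInequalities.norm_sqrt_mul_le_one {α : ℕ → ℕ → ℂ}
    (hsym : ∀ m n : ℕ, 1 ≤ m → 1 ≤ n → α m n = α n m) (hineq : GrunskyInequalities α)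
    {k l : ℕ} (hk : 1 ≤ k) (hl : 1 ≤ l) :
    ‖(Real.sqrt ((k : ℝ) * (l : ℝ)) : ℂ) * α k l‖ ≤ 1 := by
  classical
  set c : ℕ → ℕ → ℂ := fun m n => (Real.sqrt ((m : ℝ) * (n : ℝ)) : ℂ) * α m n
  have hkN : k ∈ Finset.Icc 1 (max k l) := Finset.mem_Icc.2 ⟨hk, le_max_left k l⟩
  have hlN : l ∈ Finset.Icc 1 (max k l) := Finset.mem_Icc.2 ⟨hl, le_max_right k l⟩
  have hQ : ∀ a b : ℂ, ‖a ^ 2 * c k k + a * b * (c k l + c l k) + b ^ 2 * c l l‖ ≤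
      ∑ n ∈ Finset.Icc 1 (max k l), ‖(Pi.single k a + Pi.single l b : ℕ → ℂ) n‖ ^ 2 :=
    fun a b => sum_sum_mul_pi_single_add_pi_single _ c hkN hlN a b ▸
      hineq _ (hk.trans (le_max_left k l)) _
  obtain rfl | hkl := eq_or_ne k l
  · calc ‖c k k‖ = ‖(1 : ℂ) ^ 2 * c k k + 1 * 0 * (c k k + c k k) + 0 ^ 2 * c k k‖ := by ring_nf
      _ ≤ ∑ n ∈ Finset.Icc 1 (max k k), ‖(Pi.single k 1 + Pi.single k 0 : ℕ → ℂ) n‖ ^ 2 := hQ 1 0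
      _ = 1 := by
        rw [Pi.single_zero, add_zero,
          Finset.sum_eq_single_of_mem k hkN fun n _ hn => by simp [hn]]
        simp
  · have hcomm : c l k = c k l := by simp only [c, mul_comm (l : ℝ), hsym l k hl hk]
    have hsum (b : ℂ) := sum_norm_sq_pi_single_add_pi_single _ hkN hlN hkl 1 b
    have hplus : ‖c k k + 2 * c k l + c l l‖ ≤ 2 := by
      calc _ = ‖(1 : ℂ) ^ 2 * c k k + 1 * 1 * (c k l + c l k) + 1 ^ 2 * c l l‖ := by
            rw [hcomm]; ring_nf
        _ ≤ _ := hQ 1 1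
        _ = 2 := by rw [hsum]; norm_num
    have hminus : ‖c k k - 2 * c k l + c l l‖ ≤ 2 := by
      calc _ = ‖(1 : ℂ) ^ 2 * c k k + 1 * (-1) * (c k l + c l k) + (-1) ^ 2 * c l l‖ := by
            rw [hcomm]; ring_nf
        _ ≤ _ := hQ 1 (-1)
        _ = 2 := by rw [hsum]; norm_num
    have h4 : ‖(4 : ℂ) * c k l‖ ≤ 4 :=
      calc _ = ‖(c k k + 2 * c k l + c l l) - (c k k - 2 * c k l + c l l)‖ := by ring_nf
        _ ≤ 4 := (norm_sub_le _ _).trans (by linarith)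
    rw [norm_mul] at h4
    norm_num at h4
    linarith

theorem GrunskyInequalities.norm_le_one {α : ℕ → ℕ → ℂ}
    (hsym : ∀ m n : ℕ, 1 ≤ m → 1 ≤ n → α m n = α n m) (hineq : GrunskyInequalities α)
    {k l : ℕ} (hk : 1 ≤ k) (hl : 1 ≤ l) : ‖α k l‖ ≤ 1 := by
  have hkl : (1 : ℝ) ≤ (k : ℝ) * (l : ℝ) :=
    one_le_mul_of_one_le_of_one_le (by exact_mod_cast hk) (by exact_mod_cast hl)
  calc ‖α k l‖ ≤ Real.sqrt ((k : ℝ) * (l : ℝ)) * ‖α k l‖ :=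
        le_mul_of_one_le_left (norm_nonneg _) (Real.one_le_sqrt.mpr hkl)
    _ = ‖(Real.sqrt ((k : ℝ) * (l : ℝ)) : ℂ) * α k l‖ := by
        rw [norm_mul, Complex.norm_of_nonneg (Real.sqrt_nonneg _)]
    _ ≤ 1 := hineq.norm_sqrt_mul_le_one hsym hk hl

noncomputable def grunskySeries (α : ℕ → ℕ → ℂ) (z ζ : ℂ) : ℂ :=
  ∑' p : ℕ × ℕ, α (p.1 + 1) (p.2 + 1) * (z⁻¹) ^ (p.1 + 1) * (ζ⁻¹) ^ (p.2 + 1)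

theorem grunskySeries_comm (α : ℕ → ℕ → ℂ) (z ζ : ℂ) :
    grunskySeries α z ζ = grunskySeries (fun m n => α n m) ζ z := by
  rw [grunskySeries, ← (Equiv.prodComm ℕ ℕ).tsum_eq, grunskySeries]
  exact tsum_congr fun p => by simp only [Equiv.prodComm_apply, Prod.fst_swap, Prod.snd_swap]; ring

theorem summable_pow_succ_mul_pow_succ {s t : ℝ} (hs₀ : 0 ≤ s) (hs : s < 1) (ht₀ : 0 ≤ t)
    (ht : t < 1) : Summable fun p : ℕ × ℕ => s ^ (p.1 + 1) * t ^ (p.2 + 1) := by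
  have hgeom {x : ℝ} (hx₀ : 0 ≤ x) (hx : x < 1) : Summable fun n : ℕ => x ^ (n + 1) :=
    (summable_nat_add_iff 1).mpr (summable_geometric_of_lt_one hx₀ hx)
  exact (hgeom hs₀ hs).mul_of_nonneg (hgeom ht₀ ht) (fun _ => by positivity)
    fun _ => by positivity

theorem differentiableOn_grunskySeries_left {α : ℕ → ℕ → ℂ} {C : ℝ}
    (hα : ∀ m n, ‖α (m + 1) (n + 1)‖ ≤ C) {w : ℂ} (hw : 1 < ‖w‖) :
    DifferentiableOn ℂ (fun z => grunskySeries α z w) {z | 1 < ‖z‖} := by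
  intro z₀ hz₀
  obtain ⟨r, hr, hrz₀⟩ := exists_between (α := ℝ) hz₀
  have hV : IsOpen {z : ℂ | r < ‖z‖} := isOpen_lt continuous_const continuous_norm
  refine (DifferentiableOn.differentiableAt ?_ (hV.mem_nhds hrz₀)).differentiableWithinAt
  have hC : 0 ≤ C := (norm_nonneg _).trans (hα 0 0)
  refine differentiableOn_tsum_of_summable_norm
    (u := fun p => C * (r⁻¹ ^ (p.1 + 1) * ‖w‖⁻¹ ^ (p.2 + 1))) ?_ (fun p => ?_) hV ?_
  · exact (summable_pow_succ_mul_pow_succ (by positivity) (inv_lt_one_of_one_lt₀ hr)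
      (by positivity) (inv_lt_one_of_one_lt₀ hw)).mul_left C
  · refine (((differentiableOn_inv.mono fun z hz => ?_).pow _).const_mul _).mul_const _
    exact ne_zero_of_norm_ne_zero ((zero_lt_one.trans hr).trans hz).ne'
  · intro p z hz
    have hrz : ‖z‖⁻¹ ≤ r⁻¹ := inv_anti₀ (zero_lt_one.trans hr) (le_of_lt hz)
    simp only [norm_mul, norm_pow, norm_inv, mul_assoc]
    gcongr
    exact hα _ _

theorem differentiableOn_grunskySeries_right {α : ℕ → ℕ → ℂ} {C : ℝ}
    (hα : ∀ m n, ‖α (m + 1) (n + 1)‖ ≤ C) {z : ℂ} (hz : 1 < ‖z‖) :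
    DifferentiableOn ℂ (fun ζ => grunskySeries α z ζ) {ζ | 1 < ‖ζ‖} := by
  simp_rw [grunskySeries_comm α z]
  exact differentiableOn_grunskySeries_left (fun m n => hα n m) hz

theorem Set.EqOn.of_isPreconnected_of_isOpen {E : Type*} [NormedAddCommGroup E]
    [NormedSpace ℂ E] [CompleteSpace E] {f g : ℂ → E} {U V : Set ℂ}
    (hf : DifferentiableOn ℂ f U) (hg : DifferentiableOn ℂ g U) (hU : IsOpen U)
    (hUc : IsPreconnected U) (hV : IsOpen V) (hVU : V ⊆ U) (hVne : V.Nonempty)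
    (hfg : Set.EqOn f g V) : Set.EqOn f g U := by
  obtain ⟨z₀, hz₀⟩ := hVne
  exact (hf.analyticOnNhd hU).eqOn_of_preconnected_of_eventuallyEq (hg.analyticOnNhd hU) hUc
    (hVU hz₀) (eventually_of_mem (hV.mem_nhds hz₀) hfg)

theorem exists_differentiableOn_sub_eq_of_sub_eq {U V : Set ℂ} (hU : IsOpen U)
    (hUc : IsPreconnected U) (hV : IsOpen V) (hVU : V ⊆ U) {ζ₀ : ℂ} (hζ₀ : ζ₀ ∈ V)
    {f : ℂ → ℂ} {G : ℂ → ℂ → ℂ} (hGl : ∀ ζ ∈ U, DifferentiableOn ℂ (G · ζ) U)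
    (hGr : ∀ z ∈ U, DifferentiableOn ℂ (G z) U)
    (hfG : ∀ z ∈ V, ∀ ζ ∈ V, f z - f ζ = G z ζ) :
    ∃ F : ℂ → ℂ, DifferentiableOn ℂ F U ∧ Set.EqOn F f V ∧
      ∀ z ∈ U, ∀ ζ ∈ U, F z - F ζ = G z ζ := by
  set F : ℂ → ℂ := fun z => f ζ₀ + G z ζ₀
  have hF : DifferentiableOn ℂ F U := (hGl ζ₀ (hVU hζ₀)).const_add _
  have hFf : Set.EqOn F f V := fun z hz => by
    simp only [F, ← hfG z hz ζ₀ hζ₀, add_sub_cancel]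
  have hFG_left : ∀ ζ ∈ V, ∀ z ∈ U, F z - F ζ = G z ζ := fun ζ hζ =>
    Set.EqOn.of_isPreconnected_of_isOpen (hF.sub_const _) (hGl ζ (hVU hζ)) hU hUc hV hVU
      ⟨ζ, hζ⟩ fun z hz => by simp only [hFf hz, hFf hζ, hfG z hz ζ hζ]
  refine ⟨F, hF, hFf, fun z hz => ?_⟩
  exact Set.EqOn.of_isPreconnected_of_isOpen (hF.const_sub _) (hGr z hz) hU hUc hV hVU
    ⟨ζ₀, hζ₀⟩ fun ζ hζ => hFG_left ζ hζ z hz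

theorem grunsky_inequalities_imply_univalent_extension_general
    (R R' : ℝ) (hR : 1 ≤ R) (hRR' : R ≤ R')
    (f : ℂ → ℂ) (α : ℕ → ℕ → ℂ)
    (hsym : ∀ m n : ℕ, 1 ≤ m → 1 ≤ n → α m n = α n m)
    (hgrunsky : ∀ z ζ : ℂ, R' < ‖z‖ → R' < ‖ζ‖ → z ≠ ζ →
      Summable (fun p : ℕ × ℕ =>
        ‖α (p.1 + 1) (p.2 + 1)‖ *
          ‖z‖⁻¹ ^ (p.1 + 1) * ‖ζ‖⁻¹ ^ (p.2 + 1)) ∧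
      ∃ S : ℂ,
        HasSum (fun p : ℕ × ℕ =>
          α (p.1 + 1) (p.2 + 1) * (z⁻¹) ^ (p.1 + 1) * (ζ⁻¹) ^ (p.2 + 1)) S ∧
        (f z - f ζ) / (z - ζ) = Complex.exp (-S))
    (hineq : ∀ N : ℕ, 1 ≤ N → ∀ x : ℕ → ℂ,
      ‖∑ m ∈ Finset.Icc 1 N, ∑ n ∈ Finset.Icc 1 N,
          (Real.sqrt ((m : ℝ) * (n : ℝ)) : ℂ) * α m n * x m * x n‖
        ≤ ∑ n ∈ Finset.Icc 1 N, ‖x n‖ ^ 2) :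
    ∃ F : ℂ → ℂ,
      DifferentiableOn ℂ F {z : ℂ | 1 < ‖z‖} ∧
      Set.InjOn F {z : ℂ | 1 < ‖z‖} ∧
      ∀ z : ℂ, max R' 1 < ‖z‖ → F z = f z := by
  have hR' : 1 ≤ R' := hR.trans hRR'
  have hα (m n : ℕ) : ‖α (m + 1) (n + 1)‖ ≤ 1 :=
    GrunskyInequalities.norm_le_one hsym hineq (Nat.le_add_left 1 m) (Nat.le_add_left 1 n)
  set G : ℂ → ℂ → ℂ := fun z ζ => (z - ζ) * exp (-grunskySeries α z ζ)
  have hfG : ∀ z ∈ {z : ℂ | R' < ‖z‖}, ∀ ζ ∈ {z : ℂ | R' < ‖z‖}, f z - f ζ = G z ζ := by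
    intro z hz ζ hζ
    obtain rfl | hne := eq_or_ne z ζ
    · simp only [G, sub_self, zero_mul]
    obtain ⟨-, S, hS, hquot⟩ := hgrunsky z ζ hz hζ hne
    rw [← mul_div_cancel₀ (f z - f ζ) (sub_ne_zero.2 hne), hquot, ← hS.tsum_eq]
    rfl
  have hnorm : ‖((R' + 1 : ℝ) : ℂ)‖ = R' + 1 := by
    rw [Complex.norm_real, Real.norm_of_nonneg (by linarith)]
  obtain ⟨F, hF, hFf, hFG⟩ := exists_differentiableOn_sub_eq_of_sub_eq
    (isOpen_lt continuous_const continuous_norm) (isPreconnected_setOf_lt_norm one_pos)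
    (isOpen_lt continuous_const continuous_norm) (fun z hz => hR'.trans_lt hz)
    (ζ₀ := ((R' + 1 : ℝ) : ℂ)) (G := G) (by simp only [Set.mem_ofPred_eq, hnorm]; linarith)
    (fun ζ hζ => (differentiableOn_id.sub_const ζ).mul
      (differentiableOn_grunskySeries_left hα hζ).neg.cexp)
    (fun z hz => ((differentiableOn_const z).sub differentiableOn_id).mul
      (differentiableOn_grunskySeries_right hα hz).neg.cexp) hfG
  refine ⟨F, hF, fun z hz ζ hζ hFzζ => ?_, fun z hz => hFf (max_eq_left hR' ▸ hz)⟩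
  have hG : G z ζ = 0 := by rw [← hFG z hz ζ hζ, hFzζ, sub_self]
  exact sub_eq_zero.mp ((mul_eq_zero.mp hG).resolve_right (exp_ne_zero _))

/-- **Grunsky's theorem (sufficiency direction).**  A holomorphic function
`f(z) = z + b₀ + Σ bₙ z⁻ⁿ` on `{|z| > R}` that is injective on `{|z| > R'}` and whose
Grunsky coefficients there satisfy the Grunsky inequalities extends to an injective
holomorphic function on the whole exterior disk `𝔻* = {|z| > 1}`. -/
theorem grunsky_inequalities_imply_univalent_extension
    (R R' : ℝ) (hR : 1 ≤ R) (hRR' : R ≤ R')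
    (f : ℂ → ℂ) (b : ℕ → ℂ) (α : ℕ → ℕ → ℂ)
    (hf : DifferentiableOn ℂ f {z : ℂ | R < ‖z‖})
    (hlaurent : ∀ z : ℂ, R < ‖z‖ →
      HasSum (fun n : ℕ => b (n + 1) * (z⁻¹) ^ (n + 1)) (f z - z - b 0))
    (hinj : Set.InjOn f {z : ℂ | R' < ‖z‖})
    (hsym : ∀ m n : ℕ, 1 ≤ m → 1 ≤ n → α m n = α n m)
    (hgrunsky : ∀ z ζ : ℂ, R' < ‖z‖ → R' < ‖ζ‖ → z ≠ ζ →
      Summable (fun p : ℕ × ℕ =>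
        ‖α (p.1 + 1) (p.2 + 1)‖ *
          ‖z‖⁻¹ ^ (p.1 + 1) * ‖ζ‖⁻¹ ^ (p.2 + 1)) ∧
      ∃ S : ℂ,
        HasSum (fun p : ℕ × ℕ =>
          α (p.1 + 1) (p.2 + 1) * (z⁻¹) ^ (p.1 + 1) * (ζ⁻¹) ^ (p.2 + 1)) S ∧
        (f z - f ζ) / (z - ζ) = Complex.exp (-S))
    (hineq : ∀ N : ℕ, 1 ≤ N → ∀ x : ℕ → ℂ,
      ‖∑ m ∈ Finset.Icc 1 N, ∑ n ∈ Finset.Icc 1 N,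
          (Real.sqrt ((m : ℝ) * (n : ℝ)) : ℂ) * α m n * x m * x n‖
        ≤ ∑ n ∈ Finset.Icc 1 N, ‖x n‖ ^ 2) :
    ∃ F : ℂ → ℂ,
      DifferentiableOn ℂ F {z : ℂ | 1 < ‖z‖} ∧
      Set.InjOn F {z : ℂ | 1 < ‖z‖} ∧
      ∀ z : ℂ, max R' 1 < ‖z‖ → F z = f z :=
  grunsky_inequalities_imply_univalent_extension_general R R' hR hRR' f α hsym hgrunsky hineq
end

section
/- Let A : ℕ × ℕ → ℂ be a symmetric matrix (A_{mn} = A_{nm} for all m, n) and suppose the quantity κ := sup{ |Σ_{m,n} A_{mn} x_m x_n| : x : ℕ → ℂ finitely supported with Σ_n |x_n|² = 1 } is finite. Then A induces a bounded linear operator on ℓ²: for every finitely supported x one has Σ_m |Σ_n A_{mn} x_n|² ≤ κ² · Σ_n |x_n|²; moreover κ is the least constant with this property, i.e. the supremum of the modulus of the quadratic form of A over the unit sphere of finitely supported sequences equals the ℓ²-operator norm of A. -/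
/-!
Polarization: since `A` is symmetric, its bilinear form `B(x, y) = ∑ A m n x m y n` satisfies
`4 B(x, y) = B(x + y, x + y) - B(x - y, x - y)`, and the parallelogram law turns `|B(x, x)| ≤ κ`
on the unit sphere into `|B(x, y)| ≤ κ ‖x‖ ‖y‖`. As `B` is bilinear rather than sesquilinear,
testing it against `y = conj (A x)`, truncated to finitely many rows, gives
`‖A x‖² = B(y, x) ≤ κ ‖A x‖ ‖x‖`. Conversely `|B(x, x)| = |∑ x m (A x) m| ≤ ‖x‖ ‖A x‖` by
Cauchy–Schwarz, so `κ` is optimal.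
-/

open Finset Matrix

namespace LinearMap

variable {𝕜 F : Type*} [RCLike 𝕜] [SeminormedAddCommGroup F] [NormedSpace 𝕜 F] {κ : ℝ}

section NormedSpace

variable {E : Type*} [NormedAddCommGroup E] [NormedSpace 𝕜 E] (B : E →ₗ[𝕜] E →ₗ[𝕜] F)

theorem norm_apply_apply_le_of_forall_norm_eq_one
    (h : ∀ x y : E, ‖x‖ = 1 → ‖y‖ = 1 → ‖B x y‖ ≤ κ) (x y : E) :
    ‖B x y‖ ≤ κ * ‖x‖ * ‖y‖ := by
  rcases eq_or_ne x 0 with rfl | hx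
  · simp
  rcases eq_or_ne y 0 with rfl | hy
  · simp
  have hx' : (‖x‖ : 𝕜) ≠ 0 := by simpa using hx
  have hy' : (‖y‖ : 𝕜) ≠ 0 := by simpa using hy
  have hxy : ‖B x y‖ = ‖x‖ * ‖y‖ * ‖B ((‖x‖⁻¹ : 𝕜) • x) ((‖y‖⁻¹ : 𝕜) • y)‖ := by
    conv_lhs => rw [← smul_inv_smul₀ hx' x, ← smul_inv_smul₀ hy' y]
    simp only [map_smul, smul_apply, norm_smul, RCLike.norm_ofReal, abs_norm]
    ring
  rw [hxy, mul_rotate κ]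
  exact mul_le_mul_of_nonneg_left (h _ _ (norm_smul_inv_norm hx) (norm_smul_inv_norm hy))
    (by positivity)

theorem norm_apply_self_le_of_forall_norm_eq_one
    (h : ∀ x : E, ‖x‖ = 1 → ‖B x x‖ ≤ κ) (x : E) : ‖B x x‖ ≤ κ * ‖x‖ ^ 2 := by
  rcases eq_or_ne x 0 with rfl | hx
  · simp
  have hx' : (‖x‖ : 𝕜) ≠ 0 := by simpa using hx
  have hxx : ‖B x x‖ = ‖x‖ ^ 2 * ‖B ((‖x‖⁻¹ : 𝕜) • x) ((‖x‖⁻¹ : 𝕜) • x)‖ := by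
    conv_lhs => rw [← smul_inv_smul₀ hx' x]
    simp only [map_smul, smul_apply, norm_smul, RCLike.norm_ofReal, abs_norm]
    ring
  rw [hxx, mul_comm κ]
  exact mul_le_mul_of_nonneg_left (h _ (norm_smul_inv_norm hx)) (by positivity)

end NormedSpace

theorem norm_apply_apply_le_of_symm_of_forall_norm_eq_one {E : Type*} [NormedAddCommGroup E]
    [InnerProductSpace 𝕜 E] (B : E →ₗ[𝕜] E →ₗ[𝕜] F) (hB : ∀ x y, B x y = B y x)
    (h : ∀ x : E, ‖x‖ = 1 → ‖B x x‖ ≤ κ) (x y : E) : ‖B x y‖ ≤ κ * ‖x‖ * ‖y‖ := by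
  have hdiag := B.norm_apply_self_le_of_forall_norm_eq_one h
  refine B.norm_apply_apply_le_of_forall_norm_eq_one (fun u v hu hv => ?_) x y
  have polarization : (4 : 𝕜) • B u v = B (u + v) (u + v) - B (u - v) (u - v) := by
    simp only [map_add, map_sub, add_apply, sub_apply, hB v u]
    module
  have : 4 * ‖B u v‖ ≤ 4 * κ :=
    calc 4 * ‖B u v‖ = ‖(4 : 𝕜) • B u v‖ := by rw [norm_smul, RCLike.norm_ofNat]
      _ ≤ ‖B (u + v) (u + v)‖ + ‖B (u - v) (u - v)‖ := polarization ▸ norm_sub_le _ _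
      _ ≤ κ * ‖u + v‖ ^ 2 + κ * ‖u - v‖ ^ 2 := add_le_add (hdiag _) (hdiag _)
      _ = 4 * κ := by rw [← mul_add, parallelogram_law_with_norm 𝕜, hu, hv]; ring
  linarith

end LinearMap

theorem Matrix.IsSymm.sum_norm_mulVec_sq_le {𝕜 ι : Type*} [RCLike 𝕜] [Fintype ι]
    {M : Matrix ι ι 𝕜} (hM : M.IsSymm) {κ : ℝ}
    (h : ∀ v : ι → 𝕜, ∑ i, ‖v i‖ ^ 2 = 1 → ‖v ⬝ᵥ M *ᵥ v‖ ≤ κ) (v : ι → 𝕜) :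
    ∑ i, ‖(M *ᵥ v) i‖ ^ 2 ≤ κ ^ 2 * ∑ i, ‖v i‖ ^ 2 := by
  classical
  let e := (WithLp.linearEquiv 2 𝕜 (ι → 𝕜)).toLinearMap
  let B : EuclideanSpace 𝕜 ι →ₗ[𝕜] EuclideanSpace 𝕜 ι →ₗ[𝕜] 𝕜 :=
    (M.toLinearMap₂' 𝕜).compl₁₂ e e
  have hB : ∀ x y, B x y = x.ofLp ⬝ᵥ M *ᵥ y.ofLp := fun x y => M.toLinearMap₂'_apply' _ _
  have hBsymm : ∀ x y, B x y = B y x := fun x y => by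
    rw [hB, hB, dotProduct_mulVec, ← mulVec_transpose, hM.eq, dotProduct_comm]
  have hBbound := B.norm_apply_apply_le_of_symm_of_forall_norm_eq_one hBsymm fun x hx => by
    rw [hB]
    exact h _ (by rw [← EuclideanSpace.norm_sq_eq, hx, one_pow])
  set w : EuclideanSpace 𝕜 ι := WithLp.toLp 2 (M *ᵥ v)
  set w' : EuclideanSpace 𝕜 ι := WithLp.toLp 2 (star (M *ᵥ v))
  have hBw : B w' (WithLp.toLp 2 v) = (‖w‖ : 𝕜) ^ 2 := by
    rw [hB, ← inner_self_eq_norm_sq_to_K (𝕜 := 𝕜), EuclideanSpace.inner_toLp_toLp,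
      dotProduct_comm]
  have hw' : ‖w'‖ = ‖w‖ := by simp [w, w', EuclideanSpace.norm_eq]
  have hw : ‖w‖ * ‖w‖ ≤ κ * ‖WithLp.toLp 2 v‖ * ‖w‖ := by
    have := hBbound w' (WithLp.toLp 2 v)
    rwa [hBw, hw', norm_pow, RCLike.norm_ofReal, abs_norm, mul_right_comm, sq] at this
  have hwv : ‖w‖ ^ 2 ≤ (κ * ‖WithLp.toLp 2 v‖) ^ 2 := by
    nlinarith [norm_nonneg w, sq_nonneg (κ * ‖WithLp.toLp 2 v‖ - ‖w‖)]
  rwa [mul_pow, EuclideanSpace.norm_sq_eq, EuclideanSpace.norm_sq_eq] at hwv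

theorem Finset.sum_sum_mul_mul_eq_sum_mul_sum {α R : Type*} [CommSemiring R] (s : Finset α)
    (A : α → α → R) (x : α → R) :
    ∑ m ∈ s, ∑ n ∈ s, A m n * x m * x n = ∑ m ∈ s, x m * ∑ n ∈ s, A m n * x n :=
  sum_congr rfl fun m _ => by rw [mul_sum]; exact sum_congr rfl fun n _ => by ring

namespace Finsupp

variable {𝕜 α : Type*} [RCLike 𝕜] (A : α → α → 𝕜) {x : α →₀ 𝕜} {S : Finset α}

theorem sum_support_eq_sum_coe_sort {β : Type*} [AddCommMonoid β] (hS : x.support ⊆ S)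
    (f : α → 𝕜 → β) (hf : ∀ a, f a 0 = 0) : ∑ n ∈ x.support, f n (x n) = ∑ i : S, f i (x i) :=
  (x.sum_of_support_subset hS f fun a _ => hf a).trans (sum_coe_sort S _).symm

theorem sum_support_mul_eq_mulVec_submatrix (hS : x.support ⊆ S) (i : S) :
    ∑ n ∈ x.support, A i n * x n = ((of A).submatrix (↑) (↑) *ᵥ fun j : S => x j) i :=
  sum_support_eq_sum_coe_sort hS (fun n a => A i n * a) fun _ => mul_zero _

theorem sum_support_quadratic_eq_dotProduct_submatrix (hS : x.support ⊆ S) :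
    ∑ m ∈ x.support, ∑ n ∈ x.support, A m n * x m * x n =
      (fun i : S => x i) ⬝ᵥ (of A).submatrix (↑) (↑) *ᵥ fun i : S => x i := by
  rw [sum_sum_mul_mul_eq_sum_mul_sum, sum_support_eq_sum_coe_sort hS
    (fun m a => a * ∑ n ∈ x.support, A m n * x n) fun _ => zero_mul _]
  simp_rw [sum_support_mul_eq_mulVec_submatrix A hS]
  rfl

theorem sum_norm_sq_mul_le_of_symm (hA : ∀ m n, A m n = A n m) {κ : ℝ}
    (h : ∀ x : α →₀ 𝕜, ∑ n ∈ x.support, ‖x n‖ ^ 2 = 1 →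
      ‖∑ m ∈ x.support, ∑ n ∈ x.support, A m n * x m * x n‖ ≤ κ)
    (x : α →₀ 𝕜) (R : Finset α) :
    ∑ m ∈ R, ‖∑ n ∈ x.support, A m n * x n‖ ^ 2 ≤ κ ^ 2 * ∑ n ∈ x.support, ‖x n‖ ^ 2 := by
  classical
  set S := R ∪ x.support
  have hS : x.support ⊆ S := subset_union_right
  have hunit : ∀ v : S → 𝕜, ∑ i, ‖v i‖ ^ 2 = 1 → ‖v ⬝ᵥ (of A).submatrix (↑) (↑) *ᵥ v‖ ≤ κ := by
    intro v hv
    set y := indicator S fun n hn => v ⟨n, hn⟩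
    have hyS : y.support ⊆ S := support_indicator_subset _ _
    have hy : ∀ i : S, y i = v i := fun i => indicator_of_mem i.2 _
    rw [← funext hy, ← sum_support_quadratic_eq_dotProduct_submatrix A hyS]
    refine h y ?_
    rw [sum_support_eq_sum_coe_sort hyS (fun _ a => ‖a‖ ^ 2) fun _ => by simp]
    simpa only [hy] using hv
  have hsymm : ((of A).submatrix ((↑) : S → α) (↑)).IsSymm :=
    (IsSymm.ext fun i j => hA j i).submatrix _
  calc ∑ m ∈ R, ‖∑ n ∈ x.support, A m n * x n‖ ^ 2
      ≤ ∑ m ∈ S, ‖∑ n ∈ x.support, A m n * x n‖ ^ 2 :=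
        sum_le_sum_of_subset_of_nonneg subset_union_left fun _ _ _ => sq_nonneg _
    _ = ∑ i : S, ‖((of A).submatrix (↑) (↑) *ᵥ fun j : S => x j) i‖ ^ 2 := by
        rw [← sum_coe_sort]
        simp_rw [sum_support_mul_eq_mulVec_submatrix A hS]
    _ ≤ κ ^ 2 * ∑ i : S, ‖x i‖ ^ 2 := hsymm.sum_norm_mulVec_sq_le hunit _
    _ = κ ^ 2 * ∑ n ∈ x.support, ‖x n‖ ^ 2 := by
        rw [sum_support_eq_sum_coe_sort hS (fun _ a => ‖a‖ ^ 2) fun _ => by simp]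

theorem norm_sum_support_quadratic_sq_le (x : α →₀ 𝕜) :
    ‖∑ m ∈ x.support, ∑ n ∈ x.support, A m n * x m * x n‖ ^ 2 ≤
      (∑ n ∈ x.support, ‖x n‖ ^ 2) * ∑ m ∈ x.support, ‖∑ n ∈ x.support, A m n * x n‖ ^ 2 := by
  rw [sum_sum_mul_mul_eq_sum_mul_sum]
  calc ‖∑ m ∈ x.support, x m * ∑ n ∈ x.support, A m n * x n‖ ^ 2
      ≤ (∑ m ∈ x.support, ‖x m‖ * ‖∑ n ∈ x.support, A m n * x n‖) ^ 2 := by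
        gcongr
        exact (norm_sum_le _ _).trans_eq (by simp_rw [norm_mul])
    _ ≤ _ := sum_mul_sq_le_sq_mul_sq _ _ _

end Finsupp

/-- **Quadratic form norm equals operator norm for symmetric matrices.**
If `A` is a symmetric complex matrix whose quadratic form is bounded (with supremum `κ`)
on the unit sphere of finitely supported sequences, then `A` induces a bounded operator
on `ℓ²` with `Σ_m |(Ax)_m|² ≤ κ²·Σ_n |xₙ|²`, and `κ` is the least such constant. -/
theorem symmetric_matrix_quadratic_form_eq_operator_norm
    (A : ℕ → ℕ → ℂ) (hsym : ∀ m n : ℕ, A m n = A n m) (κ : ℝ)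
    (hκ : IsLUB {r : ℝ | ∃ x : ℕ →₀ ℂ,
        (∑ n ∈ x.support, ‖x n‖ ^ 2) = 1 ∧
        r = ‖∑ m ∈ x.support, ∑ n ∈ x.support, A m n * x m * x n‖} κ) :
    (∀ x : ℕ →₀ ℂ,
      Summable (fun m : ℕ => ‖∑ n ∈ x.support, A m n * x n‖ ^ 2) ∧
      (∑' m : ℕ, ‖∑ n ∈ x.support, A m n * x n‖ ^ 2)
        ≤ κ ^ 2 * ∑ n ∈ x.support, ‖x n‖ ^ 2) ∧
    (∀ C : ℝ, 0 ≤ C →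
      (∀ x : ℕ →₀ ℂ,
        (∑' m : ℕ, ‖∑ n ∈ x.support, A m n * x n‖ ^ 2)
          ≤ C ^ 2 * ∑ n ∈ x.support, ‖x n‖ ^ 2) →
      κ ≤ C) := by
  have hpartial := Finsupp.sum_norm_sq_mul_le_of_symm A hsym fun x hx => hκ.1 ⟨x, hx, rfl⟩
  have hsummable (x : ℕ →₀ ℂ) := summable_of_sum_range_le (fun _ => sq_nonneg _)
    fun k => hpartial x (range k)
  refine ⟨fun x => ⟨hsummable x, Real.tsum_le_of_sum_range_le (fun _ => sq_nonneg _)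
    fun k => hpartial x (range k)⟩, fun C hC hbound => hκ.2 ?_⟩
  rintro _ ⟨x, hx, rfl⟩
  refine (pow_le_pow_iff_left₀ (norm_nonneg _) hC two_ne_zero).1 ?_
  calc _ ≤ (∑ n ∈ x.support, ‖x n‖ ^ 2) * ∑ m ∈ x.support, ‖∑ n ∈ x.support, A m n * x n‖ ^ 2 :=
        Finsupp.norm_sum_support_quadratic_sq_le A x
    _ ≤ ∑' m, ‖∑ n ∈ x.support, A m n * x n‖ ^ 2 := by
        rw [hx, one_mul]
        exact (hsummable x).sum_le_tsum _ fun _ _ => sq_nonneg _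
    _ ≤ C ^ 2 := by simpa [hx] using hbound x
end

section
/- Let f be an injective holomorphic function on 𝔻* = {z ∈ ℂ : |z| > 1} such that f(z) ≠ 0 for all z ∈ 𝔻* and f(z) − z → b₀ as |z| → ∞ for some constant b₀. Then for every integer p ≥ 2 there exists an injective holomorphic function g on 𝔻* (the p-th root transform of f) such that g(z)^p = f(z^p) for all z ∈ 𝔻*, g(z)/z → 1 as |z| → ∞, and g is p-symmetric: g(ε z) = ε g(z) for every p-th root of unity ε and all z ∈ 𝔻*. -/
/-!
The map `w ↦ w · f(1/w)` moves `∞` to the centre of the unit disc; the normalisation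
`f(z) - z → b₀` makes it extend holomorphically to `0` with value `1`, and it has no zeros.
On the disc it therefore has a holomorphic logarithm `ψ` with `ψ 0 = 0`, and
`g(z) = z · exp (ψ (z⁻ᵖ) / p)` is the root transform. Its `p`-symmetry is read off the formula,
and with the injectivity of `f` it gives the injectivity of `g`: `g z₁ = g z₂` forces
`z₁ᵖ = z₂ᵖ`, so `z₂ = ε z₁` for a `p`-th root of unity `ε`, and then `ε g z₁ = g z₁`.
-/

open Complex Filter Metric Set Bornology Topology

theorem exists_exp_eq_of_differentiableOn_ball {φ : ℂ → ℂ} {c a : ℂ} {r : ℝ}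
    (hφ : DifferentiableOn ℂ φ (ball c r)) (hne : ∀ w ∈ ball c r, φ w ≠ 0) (ha : exp a = φ c) :
    ∃ ψ : ℂ → ℂ, DifferentiableOn ℂ ψ (ball c r) ∧ ψ c = a ∧
      ∀ w ∈ ball c r, exp (ψ w) = φ w := by
  have hlogDeriv : DifferentiableOn ℂ (logDeriv φ) (ball c r) :=
    (hφ.deriv isOpen_ball).div hφ hne
  obtain ⟨ψ, hψc, hψ⟩ := hlogDeriv.isExactOn_ball.with_val_at c a
  have hψd : DifferentiableOn ℂ ψ (ball c r) :=
    fun w hw ↦ (hψ w hw).differentiableAt.differentiableWithinAt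
  refine ⟨ψ, hψd, hψc, fun w hw ↦ ?_⟩
  -- `φ · exp (-ψ)` has derivative `φ' e^{-ψ} - φ e^{-ψ} φ'/φ = 0`, so it is constant on the ball.
  have hderiv : ∀ z ∈ ball c r, HasDerivAt (fun z ↦ φ z * exp (-ψ z)) 0 z := by
    intro z hz
    have h := ((hφ.differentiableAt (isOpen_ball.mem_nhds hz)).hasDerivAt).fun_mul
      (hψ z hz).fun_neg.cexp
    refine h.congr_deriv ?_
    rw [logDeriv_apply]
    field_simp [hne z hz]
    ring
  have hconst : φ w * exp (-ψ w) = φ c * exp (-ψ c) :=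
    isOpen_ball.is_const_of_deriv_eq_zero (convex_ball c r).isPreconnected
      (fun z hz ↦ (hderiv z hz).differentiableAt.differentiableWithinAt)
      (fun z hz ↦ (hderiv z hz).deriv) hw (mem_ball_self (pos_of_mem_ball hw))
  rw [hψc, ← ha, ← exp_add, add_neg_cancel, exp_zero, exp_neg] at hconst
  field_simp at hconst
  exact hconst.symm

noncomputable def mulCompInv (f : ℂ → ℂ) : ℂ → ℂ :=
  Function.update (fun w ↦ w * f w⁻¹) 0 1

lemma mulCompInv_apply_of_ne_zero (f : ℂ → ℂ) {w : ℂ} (hw : w ≠ 0) :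
    mulCompInv f w = w * f w⁻¹ :=
  Function.update_of_ne hw _ _

lemma mul_mulCompInv_inv (f : ℂ → ℂ) {z : ℂ} (hz : z ≠ 0) : z * mulCompInv f z⁻¹ = f z := by
  rw [mulCompInv_apply_of_ne_zero f (inv_ne_zero hz), inv_inv, ← mul_assoc, mul_inv_cancel₀ hz,
    one_mul]

lemma ne_zero_of_one_lt_norm {z : ℂ} (hz : 1 < ‖z‖) : z ≠ 0 :=
  norm_pos_iff.mp (one_pos.trans hz)

lemma one_lt_norm_inv_of_mem_ball {w : ℂ} (hw : w ∈ ball (0 : ℂ) 1) (hw0 : w ≠ 0) :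
    1 < ‖w⁻¹‖ := by
  rw [norm_inv]
  exact (one_lt_inv₀ (norm_pos_iff.mpr hw0)).mpr (mem_ball_zero_iff.mp hw)

section

variable {f : ℂ → ℂ}

lemma mulCompInv_ne_zero (hne : ∀ z : ℂ, 1 < ‖z‖ → f z ≠ 0) :
    ∀ w ∈ ball (0 : ℂ) 1, mulCompInv f w ≠ 0 := by
  intro w hw
  rcases eq_or_ne w 0 with rfl | hw0
  · simp [mulCompInv]
  · rw [mulCompInv_apply_of_ne_zero f hw0]
    exact mul_ne_zero hw0 (hne _ (one_lt_norm_inv_of_mem_ball hw hw0))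

lemma continuousAt_mulCompInv_zero {b : ℂ} (hf : Tendsto (fun z ↦ f z - z) (cobounded ℂ) (𝓝 b)) :
    ContinuousAt (mulCompInv f) 0 := by
  have h : Tendsto (fun w : ℂ ↦ w * (f w⁻¹ - w⁻¹) + 1) (𝓝[≠] 0) (𝓝 (0 * b + 1)) :=
    ((tendsto_id.mono_left nhdsWithin_le_nhds).mul
      (hf.comp tendsto_inv₀_nhdsNE_zero)).add tendsto_const_nhds
  rw [zero_mul, zero_add] at h
  refine continuousAt_update_same.mpr (h.congr' ?_)
  filter_upwards [self_mem_nhdsWithin] with w (hw : w ≠ 0)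
  rw [mul_sub, mul_inv_cancel₀ hw, sub_add_cancel]

lemma differentiableOn_mulCompInv (hf : DifferentiableOn ℂ f {z : ℂ | 1 < ‖z‖}) {b : ℂ}
    (hb : Tendsto (fun z ↦ f z - z) (cobounded ℂ) (𝓝 b)) :
    DifferentiableOn ℂ (mulCompInv f) (ball 0 1) := by
  refine (Complex.differentiableOn_compl_singleton_and_continuousAt_iff
    (ball_mem_nhds 0 one_pos)).mp ⟨?_, continuousAt_mulCompInv_zero hb⟩
  have hmaps : MapsTo (·⁻¹) (ball (0 : ℂ) 1 \ {0}) {z : ℂ | 1 < ‖z‖} :=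
    fun w hw ↦ one_lt_norm_inv_of_mem_ball hw.1 hw.2
  exact (differentiableOn_id.mul (hf.comp (differentiableOn_inv.mono fun w hw ↦ hw.2) hmaps)).congr
    fun w hw ↦ mulCompInv_apply_of_ne_zero f hw.2

end

lemma injOn_of_pow_eq_comp_pow {g F : ℂ → ℂ} {p : ℕ} {U V : Set ℂ} (hU : 0 ∉ U)
    (hsym : ∀ ε : ℂ, ε ^ p = 1 → ∀ z ∈ U, g (ε * z) = ε * g z) (hg : ∀ z ∈ U, g z ≠ 0)
    (hpow : ∀ z ∈ U, g z ^ p = F (z ^ p)) (hmaps : MapsTo (· ^ p) U V) (hF : InjOn F V) :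
    InjOn g U := by
  intro z₁ hz₁ z₂ hz₂ heq
  have hz₁0 : z₁ ≠ 0 := ne_of_mem_of_not_mem hz₁ hU
  have hpow_eq : z₁ ^ p = z₂ ^ p :=
    hF (hmaps hz₁) (hmaps hz₂) (by rw [← hpow z₁ hz₁, ← hpow z₂ hz₂, heq])
  -- `z₂ = ε z₁` for the `p`-th root of unity `ε = z₂ / z₁`, and symmetry forces `ε = 1`.
  set ε := z₂ / z₁ with hε_def
  have hε : ε ^ p = 1 := by rw [hε_def, div_pow, ← hpow_eq, div_self (pow_ne_zero p hz₁0)]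
  have hz₂ : z₂ = ε * z₁ := (div_mul_cancel₀ z₂ hz₁0).symm
  have hfix : ε * g z₁ = g z₁ := by rw [← hsym ε hε z₁ hz₁, ← hz₂, heq]
  rw [hz₂, (mul_eq_right₀ (hg z₁ hz₁)).mp hfix, one_mul]

noncomputable def rootTransformOfLog (ψ : ℂ → ℂ) (p : ℕ) (z : ℂ) : ℂ :=
  z * exp (ψ (z ^ p)⁻¹ / p)

section

variable {ψ : ℂ → ℂ} {p : ℕ}

lemma rootTransformOfLog_mul_of_pow_eq_one {ε : ℂ} (hε : ε ^ p = 1) (z : ℂ) :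
    rootTransformOfLog ψ p (ε * z) = ε * rootTransformOfLog ψ p z := by
  simp only [rootTransformOfLog, mul_pow, hε, one_mul, mul_assoc]

lemma rootTransformOfLog_pow (hp : p ≠ 0) (z : ℂ) :
    rootTransformOfLog ψ p z ^ p = z ^ p * exp (ψ (z ^ p)⁻¹) := by
  rw [rootTransformOfLog, mul_pow, ← exp_nat_mul, mul_div_cancel₀ _ (Nat.cast_ne_zero.mpr hp)]

lemma inv_pow_mem_ball (hp : p ≠ 0) {z : ℂ} (hz : 1 < ‖z‖) : (z ^ p)⁻¹ ∈ ball (0 : ℂ) 1 := by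
  rw [mem_ball_zero_iff, norm_inv, norm_pow]
  exact inv_lt_one_of_one_lt₀ (one_lt_pow₀ hz hp)

lemma differentiableOn_rootTransformOfLog (hp : p ≠ 0) (hψ : DifferentiableOn ℂ ψ (ball 0 1)) :
    DifferentiableOn ℂ (rootTransformOfLog ψ p) {z : ℂ | 1 < ‖z‖} := by
  intro z (hz : 1 < ‖z‖)
  have hz0 : z ^ p ≠ 0 := pow_ne_zero p (ne_zero_of_one_lt_norm hz)
  have hinv : DifferentiableAt ℂ (fun z : ℂ ↦ (z ^ p)⁻¹) z :=
    (differentiableAt_pow p).inv hz0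
  exact (differentiableAt_id.mul (((hψ.differentiableAt (isOpen_ball.mem_nhds
    (inv_pow_mem_ball hp hz))).comp z hinv).div_const _).cexp).differentiableWithinAt

lemma tendsto_rootTransformOfLog_div (hp : p ≠ 0) (hψ : ContinuousAt ψ 0) (hψ0 : ψ 0 = 0) :
    Tendsto (fun z ↦ rootTransformOfLog ψ p z / z) (cobounded ℂ) (𝓝 1) := by
  have hlim : Tendsto (fun z : ℂ ↦ exp (ψ (z ^ p)⁻¹ / p)) (cobounded ℂ) (𝓝 (exp (ψ 0 / p))) :=
    (continuous_exp.tendsto _).comp (((hψ.tendsto.comp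
      (tendsto_inv₀_cobounded.comp (tendsto_pow_cobounded_cobounded hp)))).div_const _)
  rw [hψ0, zero_div, exp_zero] at hlim
  refine hlim.congr' ?_
  filter_upwards [(tendsto_norm_cobounded_atTop).eventually_gt_atTop 0] with z hz
  rw [rootTransformOfLog, mul_div_cancel_left₀ _ (norm_pos_iff.mp hz)]

end

/-- **Existence of the `p`-th root transform.**  If `f` is an injective, zero-free
holomorphic function on `𝔻* = {|z| > 1}` with `f(z) − z → b₀` as `|z| → ∞`, then for every
`p ≥ 2` there is an injective holomorphic `g` on `𝔻*` with `g(z)^p = f(z^p)`,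
`g(z)/z → 1` at `∞`, and `g(εz) = ε·g(z)` for every `p`-th root of unity `ε`. -/
theorem root_transform_exists
    (f : ℂ → ℂ) (b₀ : ℂ)
    (hf : DifferentiableOn ℂ f {z : ℂ | 1 < ‖z‖})
    (hinj : Set.InjOn f {z : ℂ | 1 < ‖z‖})
    (hne : ∀ z : ℂ, 1 < ‖z‖ → f z ≠ 0)
    (hnorm : Tendsto (fun z => f z - z) (comap (fun z : ℂ => ‖z‖) atTop) (nhds b₀)) :
    ∀ p : ℕ, 2 ≤ p →
      ∃ g : ℂ → ℂ,
        DifferentiableOn ℂ g {z : ℂ | 1 < ‖z‖} ∧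
        Set.InjOn g {z : ℂ | 1 < ‖z‖} ∧
        (∀ z : ℂ, 1 < ‖z‖ → g z ^ p = f (z ^ p)) ∧
        Tendsto (fun z => g z / z) (comap (fun z : ℂ => ‖z‖) atTop) (nhds 1) ∧
        (∀ ε : ℂ, ε ^ p = 1 → ∀ z : ℂ, 1 < ‖z‖ → g (ε * z) = ε * g z) := by
  intro p hp
  have hp0 : p ≠ 0 := by omega
  rw [comap_norm_atTop] at hnorm ⊢
  obtain ⟨ψ, hψd, hψ0, hψ⟩ := exists_exp_eq_of_differentiableOn_ball
    (differentiableOn_mulCompInv hf hnorm) (mulCompInv_ne_zero hne)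
    (by simp [mulCompInv] : exp 0 = mulCompInv f 0)
  have hsym : ∀ ε : ℂ, ε ^ p = 1 → ∀ z : ℂ, 1 < ‖z‖ →
      rootTransformOfLog ψ p (ε * z) = ε * rootTransformOfLog ψ p z :=
    fun ε hε z _ ↦ rootTransformOfLog_mul_of_pow_eq_one hε z
  have hpow : ∀ z : ℂ, 1 < ‖z‖ → rootTransformOfLog ψ p z ^ p = f (z ^ p) := fun z hz ↦ by
    rw [rootTransformOfLog_pow hp0, hψ _ (inv_pow_mem_ball hp0 hz),
      mul_mulCompInv_inv f (pow_ne_zero p (ne_zero_of_one_lt_norm hz))]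
  have hmaps : MapsTo (· ^ p) {z : ℂ | 1 < ‖z‖} {z : ℂ | 1 < ‖z‖} :=
    fun z (hz : 1 < ‖z‖) ↦ show 1 < ‖z ^ p‖ by rw [norm_pow]; exact one_lt_pow₀ hz hp0
  have hg0 : ∀ z : ℂ, 1 < ‖z‖ → rootTransformOfLog ψ p z ≠ 0 :=
    fun z hz ↦ mul_ne_zero (ne_zero_of_one_lt_norm hz) (exp_ne_zero _)
  refine ⟨rootTransformOfLog ψ p, differentiableOn_rootTransformOfLog hp0 hψd,
    injOn_of_pow_eq_comp_pow (by simp) hsym hg0 hpow hmaps hinj,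
    hpow, tendsto_rootTransformOfLog_div hp0 (hψd.continuousOn.continuousAt
      (ball_mem_nhds 0 one_pos)) hψ0, hsym⟩
end

section
/- Let p ≥ 1 be an integer and t ∈ ℂ with |t| ≤ 1. Define G : 𝔻 → ℂ by G(z) = z · exp(−(2/p) · Log(1 + t z^p)), where Log is the principal branch of the logarithm (well defined since |t z^p| < 1 for |z| < 1, so Re(1 + t z^p) > 0). Then G is injective on the unit disk 𝔻 = {z : |z| < 1}, and G(z)^p = z^p / (1 + t z^p)² for all z ∈ 𝔻, i.e. G is the p-th root transform of the univalent function F(w) = w/(1 + t w)². -/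
/-!
Since `exp (-(2/p) log w) ^ p = w⁻²`, the `p`-th power of `G(z)` is `F(z^p)` with
`F(w) = w/(1+tw)²`, and `F` is injective on the disk for `‖t‖ ≤ 1`. Hence `G(z₁) = G(z₂)`
forces `z₁^p = z₂^p`, and then `G(z) = z · φ(z^p)` with `φ` nonvanishing gives `z₁ = z₂`.
-/

open Complex Metric Set

section NormedField

variable {𝕜 : Type*} [NormedField 𝕜]

theorem norm_mul_lt_one_of_le_of_lt {t w : 𝕜} (ht : ‖t‖ ≤ 1) (hw : ‖w‖ < 1) :
    ‖t * w‖ < 1 := by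
  rw [norm_mul]
  nlinarith [norm_nonneg t, norm_nonneg w]

theorem one_add_mul_ne_zero_of_mem_ball {t w : 𝕜} (ht : ‖t‖ ≤ 1)
    (hw : w ∈ ball (0 : 𝕜) 1) : 1 + t * w ≠ 0 := by
  intro h
  have := norm_mul_lt_one_of_le_of_lt ht (mem_ball_zero_iff.mp hw)
  rw [eq_neg_of_add_eq_zero_right h, norm_neg, norm_one] at this
  exact this.false

theorem mapsTo_pow_ball_zero_one {n : ℕ} (hn : n ≠ 0) :
    MapsTo (· ^ n) (ball (0 : 𝕜) 1) (ball (0 : 𝕜) 1) := fun w hw => by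
  rw [mem_ball_zero_iff, norm_pow] at *
  exact pow_lt_one₀ (norm_nonneg w) hw hn

theorem injOn_div_one_add_mul_sq {t : 𝕜} (ht : ‖t‖ ≤ 1) :
    InjOn (fun w => w / (1 + t * w) ^ 2) (ball (0 : 𝕜) 1) := by
  intro w₁ hw₁ w₂ hw₂ heq
  have h₁ := one_add_mul_ne_zero_of_mem_ball ht hw₁
  have h₂ := one_add_mul_ne_zero_of_mem_ball ht hw₂
  rw [div_eq_div_iff (pow_ne_zero 2 h₁) (pow_ne_zero 2 h₂)] at heq
  have hfactor : (w₁ - w₂) * (1 - t * w₁ * (t * w₂)) = 0 := by linear_combination heq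
  have hsecond : 1 - t * w₁ * (t * w₂) ≠ 0 := by
    refine sub_ne_zero.mpr fun h => ?_
    have htw₁ := norm_mul_lt_one_of_le_of_lt ht (mem_ball_zero_iff.mp hw₁)
    have htw₂ := norm_mul_lt_one_of_le_of_lt ht (mem_ball_zero_iff.mp hw₂)
    have := norm_mul_lt_one_of_le_of_lt htw₁.le htw₂
    rw [← h, norm_one] at this
    exact this.false
  exact sub_eq_zero.mp ((mul_eq_zero.mp hfactor).resolve_right hsecond)

end NormedField

theorem Set.InjOn.mul_comp_pow {M : Type*} [CommMonoidWithZero M] [IsRightCancelMulZero M]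
    {s u : Set M} {F : M → M} (hF : InjOn F u) {φ : M → M} {n : ℕ}
    (hs : MapsTo (· ^ n) s u) (hφ : ∀ z ∈ s, φ (z ^ n) ≠ 0)
    (hroot : ∀ z ∈ s, (z * φ (z ^ n)) ^ n = F (z ^ n)) :
    InjOn (fun z => z * φ (z ^ n)) s := by
  intro z₁ hz₁ z₂ hz₂ heq
  have hpow : z₁ ^ n = z₂ ^ n :=
    hF (hs hz₁) (hs hz₂) (by rw [← hroot z₁ hz₁, ← hroot z₂ hz₂]; exact congrArg (· ^ n) heq)
  simp only [hpow] at heq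
  exact mul_right_cancel₀ (hφ z₂ hz₂) heq

theorem Complex.exp_neg_two_div_mul_log_pow {n : ℕ} (hn : n ≠ 0) {w : ℂ} (hw : w ≠ 0) :
    exp (-(2 / n) * log w) ^ n = (w ^ 2)⁻¹ := by
  have hn' : (n : ℂ) ≠ 0 := Nat.cast_ne_zero.mpr hn
  rw [← exp_nat_mul, show (n : ℂ) * (-(2 / n) * log w) = -(log w + log w) by field_simp; ring,
    exp_neg, exp_add, exp_log hw, sq]

/-- **The root transform of the Koebe-type function `w/(1+tw)²`.**  For `p ≥ 1` and
`|t| ≤ 1`, the function `G(z) = z·exp(−(2/p)·Log(1 + t zᵖ))` (principal logarithm) is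
injective on the unit disk and satisfies `G(z)^p = z^p/(1 + t z^p)²`, i.e. `G` is the
`p`-th root transform of `F(w) = w/(1+tw)²`. -/
theorem root_transform_koebe_type
    (p : ℕ) (hp : 1 ≤ p) (t : ℂ) (ht : ‖t‖ ≤ 1) :
    Set.InjOn (fun z : ℂ => z * Complex.exp (-(2 / (p : ℂ)) * Complex.log (1 + t * z ^ p)))
      (Metric.ball (0 : ℂ) 1) ∧
    ∀ z ∈ Metric.ball (0 : ℂ) 1,
      (z * Complex.exp (-(2 / (p : ℂ)) * Complex.log (1 + t * z ^ p))) ^ p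
        = z ^ p / (1 + t * z ^ p) ^ 2 := by
  have hp₀ : p ≠ 0 := by omega
  have hball := mapsTo_pow_ball_zero_one (𝕜 := ℂ) hp₀
  have hroot : ∀ z ∈ ball (0 : ℂ) 1,
      (z * exp (-(2 / (p : ℂ)) * log (1 + t * z ^ p))) ^ p = z ^ p / (1 + t * z ^ p) ^ 2 :=
    fun z hz => by
      rw [mul_pow, exp_neg_two_div_mul_log_pow hp₀
        (one_add_mul_ne_zero_of_mem_ball ht (hball hz)), div_eq_mul_inv]
  refine ⟨?_, hroot⟩
  exact (injOn_div_one_add_mul_sq ht).mul_comp_pow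
    (φ := fun w => exp (-(2 / p) * log (1 + t * w))) hball (fun _ _ => exp_ne_zero _) hroot
end

section
/- Let D = {z ∈ ℂ : Re z > 0 and |z² − 1| < 1} be the right-hand domain bounded by the Bernoulli lemniscate |z² − 1| = 1. Then the polynomials P_n(z) = 2√((n+1)/π) · z · (z² − 1)^n, n = 0, 1, 2, …, form an orthonormal system in L²(D): for all integers m, n ≥ 0, ∬_D P_m(z) · conj(P_n(z)) dx dy equals 1 if m = n and 0 otherwise; equivalently, ∬_D z(z²−1)^m · conj(z(z²−1)^n) dx dy = δ_{mn} · π/(4(n+1)). -/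
/-!
The map `z ↦ z² - 1` sends `D` bijectively onto the unit disc (its inverse is the principal
square root of `1 + w`, which has positive real part), with real Jacobian `|2z|² = 4|z|²`.
Since `z(z² - 1)ᵐ · conj (z(z² - 1)ⁿ) = |z|² wᵐ conj wⁿ` for `w = z² - 1`, the integral over `D`
is a quarter of `∫_{|w| < 1} wᵐ conj wⁿ`, which in polar coordinates is `δₘₙ π / (n + 1)`.
-/

open Complex MeasureTheory Set Metric ComplexConjugate

namespace Complex

variable {E : Type*} [NormedAddCommGroup E] [NormedSpace ℝ E]

theorem det_restrictScalars_toSpanSingleton (a : ℂ) :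
    ((ContinuousLinearMap.toSpanSingleton ℂ a).restrictScalars ℝ).det = normSq a := by
  have h : (((ContinuousLinearMap.toSpanSingleton ℂ a).restrictScalars ℝ) : ℂ →ₗ[ℝ] ℂ)
      = Algebra.lmul ℝ ℂ a := by
    ext x
    simp [mul_comm]
  rw [ContinuousLinearMap.det, h, ← Algebra.norm_apply, Algebra.norm_complex_apply]

theorem integral_image_eq_integral_normSq_deriv_smul {s : Set ℂ} {f f' : ℂ → ℂ}
    (hs : MeasurableSet s) (hf : ∀ z ∈ s, HasDerivWithinAt f (f' z) s z) (hinj : InjOn f s)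
    (g : ℂ → E) :
    ∫ w in f '' s, g w = ∫ z in s, normSq (f' z) • g (f z) := by
  rw [integral_image_eq_integral_abs_det_fderiv_smul volume hs
    (fun z hz => (hf z hz).hasFDerivWithinAt.restrictScalars ℝ) hinj]
  simp only [det_restrictScalars_toSpanSingleton, abs_of_nonneg (normSq_nonneg _)]

theorem injOn_sq_of_re_pos : InjOn (· ^ 2 : ℂ → ℂ) {z | 0 < z.re} := by
  intro z hz w hw h
  have hsum : z + w ≠ 0 := fun h0 => by
    have := congrArg re h0
    simp only [add_re, zero_re] at this
    linarith [hz.out, hw.out]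
  have : (z - w) * (z + w) = 0 := by linear_combination h
  exact sub_eq_zero.mp ((mul_eq_zero.mp this).resolve_right hsum)

theorem re_cpow_inv_two_pos {w : ℂ} (hw : w ∈ slitPlane) : 0 < (w ^ (2⁻¹ : ℂ)).re := by
  rw [cpow_inv_two_re, Real.sqrt_pos]
  rcases mem_slitPlane_iff.mp hw with hre | him
  · linarith [re_le_norm w]
  · linarith [abs_re_lt_norm.mpr him, neg_abs_le w.re]

theorem setIntegral_ball_zero_eq_setIntegral_polarCoord_symm (f : ℂ → E) (r : ℝ) :
    ∫ z in ball 0 r, f z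
      = ∫ p in Ioo 0 r ×ˢ Ioo (-Real.pi) Real.pi, p.1 • f (Complex.polarCoord.symm p) := by
  have hsub : Ioo 0 r ×ˢ Ioo (-Real.pi) Real.pi ⊆ _root_.polarCoord.target := by
    rw [_root_.polarCoord_target]
    exact prod_mono Ioo_subset_Ioi_self subset_rfl
  rw [← integral_indicator measurableSet_ball, ← Complex.integral_comp_polarCoord_symm,
    ← inter_eq_right.mpr hsub, ← setIntegral_indicator (measurableSet_Ioo.prod measurableSet_Ioo)]
  refine setIntegral_congr_fun _root_.polarCoord.open_target.measurableSet fun p hp => ?_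
  rw [_root_.polarCoord_target] at hp
  have hmem : Complex.polarCoord.symm p ∈ ball 0 r ↔ p ∈ Ioo 0 r ×ˢ Ioo (-Real.pi) Real.pi := by
    simp [abs_of_pos hp.1.out, hp.1.out, hp.2]
  by_cases h : p ∈ Ioo 0 r ×ˢ Ioo (-Real.pi) Real.pi
  · rw [indicator_of_mem (hmem.mpr h), indicator_of_mem h]
  · rw [indicator_of_notMem (mt hmem.mp h), indicator_of_notMem h, smul_zero]

theorem polarCoord_symm_pow_mul_conj_pow (p : ℝ × ℝ) (m n : ℕ) :
    Complex.polarCoord.symm p ^ m * conj (Complex.polarCoord.symm p) ^ n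
      = (p.1 : ℂ) ^ (m + n) * exp (((m - n : ℤ) : ℂ) * p.2 * I) := by
  have hconj : conj (exp (p.2 * I)) = exp (-(p.2 * I)) := by
    rw [← exp_conj, map_mul, conj_ofReal, conj_I, mul_neg]
  rw [Complex.polarCoord_symm_apply, ofReal_cos, ofReal_sin, ← exp_mul_I, map_mul, conj_ofReal,
    hconj, mul_pow, mul_pow, ← exp_nat_mul, ← exp_nat_mul, mul_mul_mul_comm, ← pow_add,
    ← exp_add]
  push_cast
  ring_nf

theorem integral_exp_int_mul_mul_I (k : ℤ) :
    ∫ θ in Ioo (-Real.pi) Real.pi, exp (k * θ * I) = if k = 0 then 2 * (Real.pi : ℂ) else 0 := by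
  have hpi : -Real.pi ≤ Real.pi := by linarith [Real.pi_pos]
  split_ifs with hk
  · simp [hk, Real.volume_real_Ioo_of_le hpi]
    ring
  have hk' : (k : ℝ) ≠ 0 := by exact_mod_cast hk
  have hsubst := intervalIntegral.integral_comp_mul_left (fun t : ℝ => exp (t * I)) hk'
    (a := -Real.pi) (b := Real.pi)
  push_cast at hsubst
  rw [← integral_Ioc_eq_integral_Ioo, ← intervalIntegral.integral_of_le hpi, hsubst, mul_neg,
    integral_exp_mul_I_eq_sin, Real.sin_int_mul_pi]
  simp

theorem integral_ball_zero_pow_mul_conj_pow {r : ℝ} (hr : 0 ≤ r) (m n : ℕ) :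
    ∫ z in ball (0 : ℂ) r, z ^ m * conj z ^ n
      = if m = n then (Real.pi : ℂ) * r ^ (2 * n + 2) / (n + 1) else 0 := by
  have hradial : ∫ ρ in Ioo 0 r, (ρ : ℂ) ^ (m + n + 1) = r ^ (m + n + 2) / (m + n + 2) := by
    simp_rw [← ofReal_pow]
    rw [integral_complex_ofReal, ← integral_Ioc_eq_integral_Ioo,
      ← intervalIntegral.integral_of_le hr, integral_pow]
    push_cast
    ring
  rw [setIntegral_ball_zero_eq_setIntegral_polarCoord_symm]
  simp_rw [polarCoord_symm_pow_mul_conj_pow, real_smul, ← mul_assoc, ← pow_succ']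
  rw [Measure.volume_eq_prod, setIntegral_prod_mul (fun ρ : ℝ => (ρ : ℂ) ^ (m + n + 1))
    (fun θ : ℝ => exp (((m - n : ℤ) : ℂ) * θ * I)), hradial, integral_exp_int_mul_mul_I]
  rcases eq_or_ne m n with rfl | h
  · have hm : (m : ℂ) + 1 ≠ 0 := Nat.cast_add_one_ne_zero m
    simp only [sub_self, if_true]
    rw [show (m : ℂ) + m + 2 = 2 * (m + 1) by ring, show m + m + 2 = 2 * m + 2 by ring]
    field_simp
  · have hk : (m - n : ℤ) ≠ 0 := sub_ne_zero.mpr (by exact_mod_cast h)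
    rw [if_neg hk, if_neg h, mul_zero]

end Complex

def lemniscateDomain : Set ℂ := {z | 0 < z.re ∧ ‖z ^ 2 - 1‖ < 1}

theorem isOpen_lemniscateDomain : IsOpen lemniscateDomain :=
  (isOpen_lt continuous_const continuous_re).inter
    (isOpen_lt (f := fun z : ℂ => ‖z ^ 2 - 1‖) (by fun_prop) continuous_const)

theorem injOn_lemniscateDomain : InjOn (fun z : ℂ => z ^ 2 - 1) lemniscateDomain :=
  fun _ hz _ hw h => injOn_sq_of_re_pos hz.1 hw.1 (sub_left_injective h)

theorem image_lemniscateDomain : (fun z : ℂ => z ^ 2 - 1) '' lemniscateDomain = ball 0 1 := by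
  refine Subset.antisymm (image_subset_iff.mpr fun z hz => mem_ball_zero_iff.mpr hz.2) ?_
  intro w hw
  have hw' : 1 + w ∈ slitPlane := mem_slitPlane_of_norm_lt_one (mem_ball_zero_iff.mp hw)
  have hsq : ((1 + w) ^ (2⁻¹ : ℂ)) ^ 2 = 1 + w := cpow_ofNat_inv_pow _ 2
  refine ⟨(1 + w) ^ (2⁻¹ : ℂ), ⟨re_cpow_inv_two_pos hw', ?_⟩, ?_⟩
  · simpa [hsq] using hw
  · simp [hsq]

theorem integral_lemniscateDomain (m n : ℕ) :
    ∫ z in lemniscateDomain, z * (z ^ 2 - 1) ^ m * conj (z * (z ^ 2 - 1) ^ n)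
      = if m = n then (Real.pi : ℂ) / (4 * (n + 1)) else 0 := by
  have hchange := integral_image_eq_integral_normSq_deriv_smul
    isOpen_lemniscateDomain.measurableSet
    (fun z _ => ((hasDerivAt_pow 2 z).sub_const 1).hasDerivWithinAt)
    injOn_lemniscateDomain (fun w => w ^ m * conj w ^ n)
  have hjacobian : ∀ z : ℂ,
      normSq (((2 : ℕ) : ℂ) * z ^ (2 - 1)) • ((z ^ 2 - 1) ^ m * conj (z ^ 2 - 1) ^ n)
        = 4 * (z * (z ^ 2 - 1) ^ m * conj (z * (z ^ 2 - 1) ^ n)) := fun z => by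
    rw [real_smul, normSq_eq_conj_mul_self]
    simp only [map_mul, map_pow, map_natCast]
    push_cast
    ring
  simp only [hjacobian, integral_const_mul, image_lemniscateDomain,
    integral_ball_zero_pow_mul_conj_pow zero_le_one, ofReal_one, one_pow, mul_one] at hchange
  rw [eq_comm, ← eq_inv_mul_iff_mul_eq₀ (by norm_num : (4 : ℂ) ≠ 0)] at hchange
  rw [hchange]
  split_ifs
  · field_simp
  · rw [mul_zero]

/-- **Orthonormal system on the Bernoulli lemniscate domain.**
On the right-hand domain `D = {Re z > 0, |z² − 1| < 1}` bounded by the Bernoulli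
lemniscate, the polynomials `P_n(z) = 2√((n+1)/π)·z(z² − 1)ⁿ` form an orthonormal
system in `L²(D)`; equivalently
`∬_D z(z²−1)ᵐ·conj(z(z²−1)ⁿ) dx dy = δ_{mn}·π/(4(n+1))`. -/
theorem lemniscate_orthonormal_system :
    (∀ m n : ℕ,
      (∫ z in {z : ℂ | 0 < z.re ∧ ‖z ^ 2 - 1‖ < 1},
          (z * (z ^ 2 - 1) ^ m) * (starRingEnd ℂ) (z * (z ^ 2 - 1) ^ n))
        = if m = n then ((Real.pi : ℂ) / (4 * ((n : ℂ) + 1))) else 0) ∧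
    (∀ m n : ℕ,
      (∫ z in {z : ℂ | 0 < z.re ∧ ‖z ^ 2 - 1‖ < 1},
          ((2 * Real.sqrt (((m : ℝ) + 1) / Real.pi) : ℝ) : ℂ) * (z * (z ^ 2 - 1) ^ m) *
            (starRingEnd ℂ)
              (((2 * Real.sqrt (((n : ℝ) + 1) / Real.pi) : ℝ) : ℂ) * (z * (z ^ 2 - 1) ^ n)))
        = if m = n then 1 else 0) := by
  refine ⟨integral_lemniscateDomain, fun m n => ?_⟩
  have hpull : ∀ (a b : ℝ) (u v : ℂ), a * u * conj (b * v) = (a * b : ℝ) * (u * conj v) :=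
    fun a b u v => by rw [map_mul, conj_ofReal, ofReal_mul]; ring
  simp_rw [hpull]
  rw [integral_const_mul]
  refine (congrArg _ (integral_lemniscateDomain m n)).trans ?_
  rcases eq_or_ne m n with rfl | h
  · have hsq : 2 * √((m + 1) / Real.pi) * (2 * √((m + 1) / Real.pi))
        = 4 * ((m + 1) / Real.pi) := by
      rw [mul_mul_mul_comm, Real.mul_self_sqrt (by positivity)]
      ring
    have hm : (m : ℂ) + 1 ≠ 0 := Nat.cast_add_one_ne_zero m
    rw [if_pos rfl, if_pos rfl, hsq]
    push_cast
    field_simp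
  · rw [if_neg h, if_neg h, mul_zero]
end
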